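/- Let J : ℝ → Matrix (Fin n) (Fin n) ℝ be smooth with J(s) invertible for all s, and A, A' smooth with A = J * A' * J⁻¹ + J * (J⁻¹)'. Let Q l be defined recursively from A (Q 0 = 1, Q (l+1) = (Q l)' - (Q l) * A) and Q' l likewise from A'. Then for all l ≥ 0, Q l = Σ_{p=0}^{l} C(l,p) · J^{(l-p)} * (Q' p) * J⁻¹. -/

import Mathlib

open Matrix Finset

noncomputable def mderiv {n : ℕ} (M : ℝ → Matrix (Fin n) (Fin n) ℝ) :
    ℝ → Matrix (Fin n) (Fin n) ℝ :=
  fun s => Matrix.of fun i j => deriv (fun t => M t i j) s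

noncomputable def vderiv {n : ℕ} (Y : ℝ → Fin n → ℝ) : ℝ → Fin n → ℝ :=
  fun s i => deriv (fun t => Y t i) s

def MSmooth {n : ℕ} (M : ℝ → Matrix (Fin n) (Fin n) ℝ) : Prop :=
  ∀ i j, ContDiff ℝ (⊤ : ℕ∞) (fun s => M s i j)

def VSmooth {n : ℕ} (Y : ℝ → Fin n → ℝ) : Prop :=
  ∀ i, ContDiff ℝ (⊤ : ℕ∞) (fun s => Y s i)

noncomputable def Psym {n : ℕ} (A : ℝ → Matrix (Fin n) (Fin n) ℝ) :
    ℕ → ℝ → Matrix (Fin n) (Fin n) ℝ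
  | 0 => fun _ => 1
  | k + 1 => fun s => mderiv (Psym A k) s + A s * Psym A k s

noncomputable def Qsym {n : ℕ} (A : ℝ → Matrix (Fin n) (Fin n) ℝ) :
    ℕ → ℝ → Matrix (Fin n) (Fin n) ℝ
  | 0 => fun _ => 1
  | k + 1 => fun s => mderiv (Qsym A k) s - Qsym A k s * A s

section Aux

variable {n : ℕ}

lemma msmooth_const (C : Matrix (Fin n) (Fin n) ℝ) : MSmooth (fun _ : ℝ => C) :=
  fun _ _ => contDiff_const

lemma msmooth_mul {M N : ℝ → Matrix (Fin n) (Fin n) ℝ} (hM : MSmooth M) (hN : MSmooth N) :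
    MSmooth (fun s => M s * N s) := by
  intro i j
  have : (fun s => (M s * N s) i j) = fun s => ∑ k, M s i k * N s k j := by
    funext s; simp [Matrix.mul_apply]
  rw [this]
  exact ContDiff.sum fun k _ => (hM i k).mul (hN k j)

lemma msmooth_smul (c : ℝ) {M : ℝ → Matrix (Fin n) (Fin n) ℝ} (hM : MSmooth M) :
    MSmooth (fun s => c • M s) := by
  intro i j
  have : (fun s => (c • M s) i j) = fun s => c * M s i j := by
    funext s; simp
  rw [this]
  exact contDiff_const.mul (hM i j)

open ContDiff in
lemma msmooth_mderiv {M : ℝ → Matrix (Fin n) (Fin n) ℝ} (hM : MSmooth M) :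
    MSmooth (mderiv M) := by
  intro i j
  have : (fun s => mderiv M s i j) = deriv (fun t => M t i j) := rfl
  rw [this]
  have h1 : ContDiff ℝ (((⊤ : ℕ∞) : WithTop ℕ∞) + 1) fun s => M s i j := by
    rw [show ((⊤ : ℕ∞) : WithTop ℕ∞) + 1 = ((⊤ : ℕ∞) : WithTop ℕ∞) by rfl]; exact hM i j
  exact (contDiff_succ_iff_deriv.mp h1).2.2

lemma msmooth_sub {M N : ℝ → Matrix (Fin n) (Fin n) ℝ} (hM : MSmooth M) (hN : MSmooth N) :
    MSmooth (fun s => M s - N s) := by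
  intro i j
  have : (fun s => (M s - N s) i j) = fun s => M s i j - N s i j := by
    funext s; simp
  rw [this]
  exact (hM i j).sub (hN i j)

lemma msmooth_det {M : ℝ → Matrix (Fin n) (Fin n) ℝ} (hM : MSmooth M) :
    ContDiff ℝ (⊤ : ℕ∞) fun s => (M s).det := by
  have : (fun s => (M s).det)
      = fun s => ∑ σ : Equiv.Perm (Fin n),
          ((Equiv.Perm.sign σ : ℤ) : ℝ) * ∏ i, M s (σ i) i := by
    funext s
    rw [Matrix.det_apply]
    congr 1
    funext σ
    simp [Units.smul_def, zsmul_eq_mul]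
  rw [this]
  exact ContDiff.sum fun σ _ =>
    contDiff_const.mul (contDiff_prod fun i _ => hM (σ i) i)

lemma msmooth_inv {J : ℝ → Matrix (Fin n) (Fin n) ℝ} (hJ : MSmooth J)
    (hJu : ∀ s, IsUnit (J s)) : MSmooth fun s => (J s)⁻¹ := by
  have hdet : ContDiff ℝ (⊤ : ℕ∞) fun s => (J s).det := msmooth_det hJ
  have hne : ∀ s, (J s).det ≠ 0 := fun s =>
    IsUnit.ne_zero ((Matrix.isUnit_iff_isUnit_det _).1 (hJu s))
  intro i j
  have hadj : ContDiff ℝ (⊤ : ℕ∞) fun s => (J s).adjugate i j := by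
    have : (fun s => (J s).adjugate i j)
        = fun s => ((J s).updateRow j (Pi.single i 1)).det := by
      funext s; rw [Matrix.adjugate_apply]
    rw [this]
    refine msmooth_det ?_
    intro k l
    by_cases hk : k = j
    · subst hk
      simp only [Matrix.updateRow_self]
      exact contDiff_const
    · simp only [Matrix.updateRow_ne hk]
      exact hJ k l
  have : (fun s => (J s)⁻¹ i j) = fun s => ((J s).det)⁻¹ * (J s).adjugate i j := by
    funext s
    rw [Matrix.inv_def, Ring.inverse_eq_inv]
    simp
  rw [this]
  exact (hdet.inv hne).mul hadj

lemma msmooth_qsym {A : ℝ → Matrix (Fin n) (Fin n) ℝ} (hA : MSmooth A) :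
    ∀ p, MSmooth (Qsym A p) := by
  intro p
  induction p with
  | zero => exact msmooth_const 1
  | succ p ih =>
    show MSmooth (fun s => mderiv (Qsym A p) s - Qsym A p s * A s)
    exact msmooth_sub (msmooth_mderiv ih) (msmooth_mul ih hA)

lemma msmooth_iter {J : ℝ → Matrix (Fin n) (Fin n) ℝ} (hJ : MSmooth J) :
    ∀ k, MSmooth (mderiv^[k] J) := by
  intro k
  induction k with
  | zero => exact hJ
  | succ k ih =>
    rw [Function.iterate_succ_apply']
    exact msmooth_mderiv ih

lemma mderiv_mul {M N : ℝ → Matrix (Fin n) (Fin n) ℝ} (hM : MSmooth M) (hN : MSmooth N)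
    (s : ℝ) :
    mderiv (fun t => M t * N t) s = mderiv M s * N s + M s * mderiv N s := by
  ext i j
  show deriv (fun t => (M t * N t) i j) s
    = (mderiv M s * N s) i j + (M s * mderiv N s) i j
  have h1 : (fun t => (M t * N t) i j) = fun t => ∑ k, M t i k * N t k j := by
    funext t; simp [Matrix.mul_apply]
  rw [h1, deriv_fun_sum (fun k _ =>
    (((hM i k).differentiable (by simp) s).fun_mul ((hN k j).differentiable (by simp) s)))]
  simp only [Matrix.add_apply, Matrix.mul_apply]
  rw [← Finset.sum_add_distrib]
  refine Finset.sum_congr rfl fun k _ => ?_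
  rw [deriv_fun_mul ((hM i k).differentiable (by simp) s) ((hN k j).differentiable (by simp) s)]
  rfl

lemma mderiv_smul (c : ℝ) {M : ℝ → Matrix (Fin n) (Fin n) ℝ} (hM : MSmooth M) (s : ℝ) :
    mderiv (fun t => c • M t) s = c • mderiv M s := by
  ext i j
  show deriv (fun t => (c • M t) i j) s = (c • mderiv M s) i j
  have h1 : (fun t => (c • M t) i j) = fun t => c * M t i j := by
    funext t; simp
  rw [h1, deriv_const_mul c ((hM i j).differentiable (by simp) s)]
  simp [mderiv]

lemma mderiv_finsum {m : ℕ} {F : ℕ → ℝ → Matrix (Fin n) (Fin n) ℝ}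
    (hF : ∀ p ∈ Finset.range m, MSmooth (F p)) (s : ℝ) :
    mderiv (fun t => ∑ p ∈ Finset.range m, F p t) s
      = ∑ p ∈ Finset.range m, mderiv (F p) s := by
  ext i j
  show deriv (fun t => (∑ p ∈ Finset.range m, F p t) i j) s
    = (∑ p ∈ Finset.range m, mderiv (F p) s) i j
  have h1 : (fun t => (∑ p ∈ Finset.range m, F p t) i j)
      = fun t => ∑ p ∈ Finset.range m, F p t i j := by
    funext t; simp [Matrix.sum_apply]
  rw [h1, deriv_fun_sum (fun p hp => ((hF p hp i j).differentiable (by simp) s))]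
  simp [Matrix.sum_apply, mderiv]

lemma pascal_combine {M : Type*} [AddCommGroup M] [Module ℝ M] (l : ℕ) (T : ℕ → ℕ → M) :
    ((∑ p ∈ Finset.range (l + 1), (l.choose p : ℝ) • T (l + 1 - p) p)
      + ∑ p ∈ Finset.range (l + 1), (l.choose p : ℝ) • T (l - p) (p + 1))
    = ∑ p ∈ Finset.range (l + 2), ((l + 1).choose p : ℝ) • T (l + 1 - p) p := by
  rw [Finset.sum_range_succ' (fun p => ((l + 1).choose p : ℝ) • T (l + 1 - p) p) (l + 1)]
  have h1 : ∀ p ∈ Finset.range (l + 1),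
      ((l + 1).choose (p + 1) : ℝ) • T (l + 1 - (p + 1)) (p + 1)
        = (l.choose p : ℝ) • T (l - p) (p + 1) + (l.choose (p + 1) : ℝ) • T (l - p) (p + 1) := by
    intro p _
    have : l + 1 - (p + 1) = l - p := by omega
    rw [this, Nat.choose_succ_succ]
    push_cast
    rw [add_smul]
  rw [Finset.sum_congr rfl h1, Finset.sum_add_distrib]
  have h2 : ∑ p ∈ Finset.range (l + 1), (l.choose p : ℝ) • T (l + 1 - p) p
      = (∑ p ∈ Finset.range l, (l.choose (p + 1) : ℝ) • T (l - p) (p + 1))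
        + (l.choose 0 : ℝ) • T (l + 1) 0 := by
    rw [Finset.sum_range_succ' (fun p => (l.choose p : ℝ) • T (l + 1 - p) p) l]
    congr 1
    refine Finset.sum_congr rfl fun p _ => ?_
    have : l + 1 - (p + 1) = l - p := by omega
    rw [this]
  have h3 : ∑ p ∈ Finset.range (l + 1), (l.choose (p + 1) : ℝ) • T (l - p) (p + 1)
      = ∑ p ∈ Finset.range l, (l.choose (p + 1) : ℝ) • T (l - p) (p + 1) := by
    rw [Finset.sum_range_succ]
    simp [Nat.choose_succ_self]
  rw [h2, h3]
  simp [Nat.choose_zero_right]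
  abel

end Aux

theorem stmt12 {n : ℕ} (J A A' : ℝ → Matrix (Fin n) (Fin n) ℝ)
    (hJ : MSmooth J) (hJinv : ∀ s, IsUnit (J s)) (hA : MSmooth A) (hA' : MSmooth A')
    (hgauge : ∀ s, A s = J s * A' s * (J s)⁻¹ + J s * mderiv (fun t => (J t)⁻¹) s) :
    ∀ (l : ℕ) (s : ℝ),
      Qsym A l s =
        ∑ p ∈ Finset.range (l + 1),
          (l.choose p : ℝ) • (mderiv^[l - p] J s * Qsym A' p s * (J s)⁻¹) := by
  have hdet : ∀ s, IsUnit (J s).det := fun s =>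
    (Matrix.isUnit_iff_isUnit_det _).1 (hJinv s)
  have hJi : MSmooth fun t => (J t)⁻¹ := msmooth_inv hJ hJinv
  have hQ' : ∀ p, MSmooth (Qsym A' p) := msmooth_qsym hA'
  have hD : ∀ k, MSmooth (mderiv^[k] J) := msmooth_iter hJ
  have hJinvA : ∀ t, (J t)⁻¹ * A t = A' t * (J t)⁻¹ + mderiv (fun u => (J u)⁻¹) t := by
    intro t
    rw [hgauge t, Matrix.mul_add, ← Matrix.mul_assoc, ← Matrix.mul_assoc,
      Matrix.nonsing_inv_mul _ (hdet t), Matrix.one_mul, ← Matrix.mul_assoc,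
      Matrix.nonsing_inv_mul _ (hdet t), Matrix.one_mul]
  intro l
  induction l with
  | zero =>
    intro s
    show (1 : Matrix (Fin n) (Fin n) ℝ) = _
    rw [Finset.sum_range_one]
    show (1 : Matrix (Fin n) (Fin n) ℝ)
      = ((Nat.choose 0 0 : ℕ) : ℝ) • (J s * Qsym A' 0 s * (J s)⁻¹)
    show (1 : Matrix (Fin n) (Fin n) ℝ)
      = ((Nat.choose 0 0 : ℕ) : ℝ) • (J s * (1 : Matrix (Fin n) (Fin n) ℝ) * (J s)⁻¹)
    rw [Matrix.mul_one, Matrix.mul_nonsing_inv _ (hdet s)]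
    simp
  | succ l ih =>
    intro s
    set F : ℕ → ℝ → Matrix (Fin n) (Fin n) ℝ :=
      fun p t => (l.choose p : ℝ) • (mderiv^[l - p] J t * Qsym A' p t * (J t)⁻¹) with hFdef
    have hFs : ∀ p, MSmooth (F p) := fun p =>
      msmooth_smul _ (msmooth_mul (msmooth_mul (hD (l - p)) (hQ' p)) hJi)
    have hQl : Qsym A l = fun t => ∑ p ∈ Finset.range (l + 1), F p t := funext ih
    have key : ∀ p ∈ Finset.range (l + 1),
        mderiv (F p) s - F p s * A s
          = (l.choose p : ℝ) • (mderiv^[l + 1 - p] J s * Qsym A' p s * (J s)⁻¹)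
            + (l.choose p : ℝ) • (mderiv^[l - p] J s * Qsym A' (p + 1) s * (J s)⁻¹) := by
      intro p hp
      have hple : p ≤ l := Nat.lt_succ_iff.mp (Finset.mem_range.mp hp)
      have hsub : l - p + 1 = l + 1 - p := by omega
      have hDQ : MSmooth fun t => mderiv^[l - p] J t * Qsym A' p t :=
        msmooth_mul (hD (l - p)) (hQ' p)
      have e1 : mderiv (F p) s
          = (l.choose p : ℝ) •
              ((mderiv (mderiv^[l - p] J) s * Qsym A' p s
                  + mderiv^[l - p] J s * mderiv (Qsym A' p) s) * (J s)⁻¹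
                + mderiv^[l - p] J s * Qsym A' p s * mderiv (fun u => (J u)⁻¹) s) := by
        rw [hFdef]
        rw [mderiv_smul _ (msmooth_mul hDQ hJi)]
        rw [mderiv_mul hDQ hJi, mderiv_mul (hD (l - p)) (hQ' p)]
      have e2 : F p s * A s
          = (l.choose p : ℝ) •
              (mderiv^[l - p] J s * (Qsym A' p s * A' s) * (J s)⁻¹
                + mderiv^[l - p] J s * Qsym A' p s * mderiv (fun u => (J u)⁻¹) s) := by
        rw [hFdef, Matrix.smul_mul]
        congr 1
        rw [Matrix.mul_assoc (mderiv^[l - p] J s * Qsym A' p s) ((J s)⁻¹) (A s),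
          hJinvA s, Matrix.mul_add]
        simp only [Matrix.mul_assoc]
      have hiter : mderiv (mderiv^[l - p] J) s = mderiv^[l + 1 - p] J s := by
        rw [← hsub, ← Function.iterate_succ_apply' mderiv (l - p) J]
      have hQsucc : Qsym A' (p + 1) s = mderiv (Qsym A' p) s - Qsym A' p s * A' s := rfl
      rw [e1, e2, ← smul_sub, hiter, hQsucc]
      rw [← smul_add]
      congr 1
      rw [Matrix.add_mul, Matrix.mul_sub, Matrix.sub_mul]
      abel
    have step : Qsym A (l + 1) s
        = ∑ p ∈ Finset.range (l + 1), (mderiv (F p) s - F p s * A s) := by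
      show mderiv (Qsym A l) s - Qsym A l s * A s = _
      rw [hQl, mderiv_finsum (fun p _ => hFs p), Finset.sum_mul, ← Finset.sum_sub_distrib]
    rw [step, Finset.sum_congr rfl key, Finset.sum_add_distrib]
    exact pascal_combine l (fun a b => mderiv^[a] J s * Qsym A' b s * (J s)⁻¹)
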